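/- Let α be a Schwartz function on ℝ. Then there is a constant C such that for all r > 1 and all m ∈ ℝ with |m| ≤ 2r, one has ∫₀^{2π} |α(m − r cos θ)| dθ ≤ C ( r^{−1} + r^{−1/2} ⟨ r − |m| ⟩^{−1/2} ). -/

import Mathlib

set_option maxHeartbeats 2000000

noncomputable section
open MeasureTheory Real
open scoped ENNReal NNReal
open Set

/-- Japanese bracket `⟨m⟩ = (1 + m²)^{1/2}`. -/
def jap (m : ℝ) : ℝ := Real.sqrt (1 + m ^ 2)


lemma arctan_antideriv (c θ₀ : ℝ) (hc : 0 < c) (θ : ℝ) :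
    HasDerivAt (fun t => c⁻¹ * Real.arctan (c * (t - θ₀)))
      ((1 + c ^ 2 * (θ - θ₀) ^ 2)⁻¹) θ := by
  have h1 : HasDerivAt (fun t : ℝ => c * (t - θ₀)) c θ := by
    simpa using ((hasDerivAt_id θ).sub_const θ₀).const_mul c
  have h2 := (Real.hasDerivAt_arctan (c * (θ - θ₀))).comp θ h1
  have h3 : HasDerivAt (fun t => c⁻¹ * Real.arctan (c * (t - θ₀))) (c⁻¹ * (1 / (1 + (c * (θ - θ₀)) ^ 2) * c)) θ := h2.const_mul c⁻¹
  convert h3 using 1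
  field_simp

lemma key_int (a b θ₀ c : ℝ) (hab : a ≤ b) (hc : 0 < c) (x : ℝ → ℝ) (hx : Continuous x)
    (hbd : ∀ θ ∈ Set.Icc a b, c ^ 2 * (θ - θ₀) ^ 2 ≤ (x θ) ^ 2) :
    (∫ θ in a..b, (1 + (x θ) ^ 2)⁻¹) ≤ π / c := by
  have cont1 : Continuous fun θ => (1 + (x θ) ^ 2)⁻¹ := by
    apply Continuous.inv₀
    · continuity
    · intro t; positivity
  have cont2 : Continuous fun θ : ℝ => (1 + c ^ 2 * (θ - θ₀) ^ 2)⁻¹ := by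
    apply Continuous.inv₀
    · continuity
    · intro t; positivity
  have step1 : (∫ θ in a..b, (1 + (x θ) ^ 2)⁻¹) ≤
      ∫ θ in a..b, (1 + c ^ 2 * (θ - θ₀) ^ 2)⁻¹ := by
    apply intervalIntegral.integral_mono_on hab
      (cont1.intervalIntegrable _ _) (cont2.intervalIntegrable _ _)
    intro θ hθ
    have := hbd θ hθ
    have h1 : (0:ℝ) < 1 + c ^ 2 * (θ - θ₀) ^ 2 := by positivity
    apply inv_anti₀ h1
    linarith
  have step2 : (∫ θ in a..b, (1 + c ^ 2 * (θ - θ₀) ^ 2)⁻¹) =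
      c⁻¹ * Real.arctan (c * (b - θ₀)) - c⁻¹ * Real.arctan (c * (a - θ₀)) := by
    apply intervalIntegral.integral_eq_sub_of_hasDerivAt
    · intro θ _; exact arctan_antideriv c θ₀ hc θ
    · exact cont2.intervalIntegrable _ _
  have h4 : Real.arctan (c * (b - θ₀)) < π / 2 := Real.arctan_lt_pi_div_two _
  have h5 : -(π / 2) < Real.arctan (c * (a - θ₀)) := Real.neg_pi_div_two_lt_arctan _
  have hci : 0 < c⁻¹ := by positivity
  calc (∫ θ in a..b, (1 + (x θ) ^ 2)⁻¹) ≤ _ := step1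
    _ = _ := step2
    _ ≤ c⁻¹ * (π/2) - c⁻¹ * (-(π/2)) := by
        have a1 := mul_le_mul_of_nonneg_left h4.le hci.le
        have a2 := mul_le_mul_of_nonneg_left h5.le hci.le
        linarith
    _ = π / c := by field_simp; ring


lemma sq_aux {c d y : ℝ} (h0 : 0 ≤ d) (h1 : c * d ≤ y) (hc : 0 ≤ c) :
    c ^ 2 * d ^ 2 ≤ y ^ 2 := by nlinarith [mul_nonneg hc h0]

lemma exists_center (a b c : ℝ) (hab : a ≤ b) (hc : 0 ≤ c) (x : ℝ → ℝ) (hx : Continuous x)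
    (hmono : ∀ ⦃θ θ'⦄, θ ∈ Icc a b → θ' ∈ Icc a b → θ ≤ θ' →
      c * (θ' - θ) ≤ x θ' - x θ) :
    ∃ θ₀, ∀ θ ∈ Icc a b, c ^ 2 * (θ - θ₀) ^ 2 ≤ (x θ) ^ 2 := by
  have ha : a ∈ Icc a b := ⟨le_refl a, hab⟩
  have hb : b ∈ Icc a b := ⟨hab, le_refl b⟩
  rcases le_or_gt 0 (x a) with hxa | hxa
  · refine ⟨a, fun θ hθ => ?_⟩
    have h1 := hmono ha hθ hθ.1
    exact sq_aux (sub_nonneg.2 hθ.1) (by linarith) hc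
  rcases le_or_gt (x b) 0 with hxb | hxb
  · refine ⟨b, fun θ hθ => ?_⟩
    have h1 := hmono hθ hb hθ.2
    have : c ^ 2 * (b - θ) ^ 2 ≤ (-(x θ)) ^ 2 :=
      sq_aux (sub_nonneg.2 hθ.2) (by linarith) hc
    calc c ^ 2 * (θ - b) ^ 2 = c ^ 2 * (b - θ) ^ 2 := by ring
      _ ≤ (-(x θ)) ^ 2 := this
      _ = (x θ) ^ 2 := by ring
  · obtain ⟨θ₀, hθ₀, hxθ₀⟩ := intermediate_value_Icc hab hx.continuousOn
      (⟨hxa.le, hxb.le⟩ : (0:ℝ) ∈ Icc (x a) (x b))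
    refine ⟨θ₀, fun θ hθ => ?_⟩
    rcases le_total θ₀ θ with hle | hle
    · have h1 := hmono hθ₀ hθ hle
      exact sq_aux (sub_nonneg.2 hle) (by linarith) hc
    · have h1 := hmono hθ hθ₀ hle
      have : c ^ 2 * (θ₀ - θ) ^ 2 ≤ (-(x θ)) ^ 2 :=
        sq_aux (sub_nonneg.2 hle) (by linarith) hc
      calc c ^ 2 * (θ - θ₀) ^ 2 = c ^ 2 * (θ₀ - θ) ^ 2 := by ring
        _ ≤ (-(x θ)) ^ 2 := this
        _ = (x θ) ^ 2 := by ring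

lemma mono_aux (M r c lo hi : ℝ)
    (h : ∀ θ ∈ Icc lo hi, c ≤ r * Real.sin θ) :
    ∀ ⦃θ θ'⦄, θ ∈ Icc lo hi → θ' ∈ Icc lo hi → θ ≤ θ' →
      c * (θ' - θ) ≤ (M - r * Real.cos θ') - (M - r * Real.cos θ) := by
  have hmono : MonotoneOn (fun t => M - r * Real.cos t - c * t) (Icc lo hi) := by
    apply monotoneOn_of_deriv_nonneg (convex_Icc lo hi)
    · exact (Continuous.continuousOn (by continuity))
    · apply Differentiable.differentiableOn
      intro t
      exact (((Real.differentiable_cos t).const_mul r).const_sub M).sub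
        ((differentiable_id.const_mul c) t)
    · intro t ht
      rw [interior_Icc] at ht
      have hd : HasDerivAt (fun t => M - r * Real.cos t - c * t)
          (r * Real.sin t - c) t := by
        have h1 : HasDerivAt (fun t => M - r * Real.cos t) (r * Real.sin t) t := by
          simpa using ((Real.hasDerivAt_cos t).const_mul r).const_sub M
        exact h1.sub (by simpa using (hasDerivAt_id t).const_mul c)
      rw [hd.deriv]
      have := h t (Ioo_subset_Icc_self ht)
      linarith
  intro θ θ' hθ hθ' hle
  have := hmono hθ hθ' hle
  simp only at this
  linarith

lemma jap_pos (s : ℝ) : 0 < jap s := Real.sqrt_pos.2 (by positivity)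
lemma one_le_jap (s : ℝ) : 1 ≤ jap s := by
  rw [jap, Real.one_le_sqrt]; nlinarith [sq_nonneg s]
lemma jap_sq (s : ℝ) : jap s ^ 2 = 1 + s ^ 2 := Real.sq_sqrt (by positivity)

lemma propP (M r : ℝ) (hr : 1 < r) (hM0 : 0 ≤ M) (hM2 : M ≤ 2 * r) :
    (∫ θ in (0:ℝ)..π, (1 + (M - r * Real.cos θ) ^ 2)⁻¹) ≤
      20 * (r⁻¹ + (Real.sqrt r)⁻¹ * (Real.sqrt (jap (r - M)))⁻¹) := by
  have hr0 : (0:ℝ) < r := by linarith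
  set s : ℝ := r - M with hs
  set σ : ℝ := max |s| 1 with hσ
  have hσ1 : 1 ≤ σ := le_max_right _ _
  have hσ0 : 0 < σ := by linarith
  have hsr : |s| ≤ r := abs_le.2 ⟨by linarith, by linarith⟩
  have hσr : σ ≤ r := max_le hsr hr.le
  set θ₁ : ℝ := Real.sqrt (σ / r) with hθ₁
  have hθ₁pos : 0 < θ₁ := Real.sqrt_pos.2 (by positivity)
  have hθ₁le1 : θ₁ ≤ 1 := by
    rw [hθ₁, Real.sqrt_le_one]
    rw [div_le_one hr0]; exact hσr
  have hθ₁pi2 : θ₁ ≤ π / 2 := hθ₁le1.trans (by linarith [Real.pi_gt_three])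
  have hθ₁sq : θ₁ ^ 2 = σ / r := Real.sq_sqrt (by positivity)
  set x : ℝ → ℝ := fun θ => M - r * Real.cos θ with hx
  have hxc : Continuous x := by fun_prop
  have hhc : Continuous fun θ => (1 + (x θ) ^ 2)⁻¹ := by
    apply Continuous.inv₀
    · fun_prop
    · intro t; positivity
  -- abbreviations for the target quantities
  have hRpos : 0 < Real.sqrt r := Real.sqrt_pos.2 hr0
  have hSpos : 0 < Real.sqrt σ := Real.sqrt_pos.2 hσ0
  have hS1 : 1 ≤ Real.sqrt σ := Real.one_le_sqrt.2 hσ1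
  have hjpos : 0 < Real.sqrt (jap s) := Real.sqrt_pos.2 (jap_pos s)
  have hJσ : jap s ≤ 2 * σ := by
    have h1 : jap s ^ 2 ≤ 2 * σ ^ 2 := by
      rw [jap_sq]
      rcases max_cases |s| 1 with ⟨he, _⟩ | ⟨he, _⟩ <;> nlinarith [sq_abs s, abs_nonneg s]
    nlinarith [jap_pos s, hσ0]
  have hjS : Real.sqrt (jap s) ≤ 1.5 * Real.sqrt σ := by
    have h1 : Real.sqrt (jap s) ^ 2 ≤ 2 * Real.sqrt σ ^ 2 := by
      rw [Real.sq_sqrt (jap_pos s).le, Real.sq_sqrt hσ0.le]; exact hJσ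
    nlinarith [hjpos, hSpos]
  have hσJ : σ ≤ jap s := by
    rw [jap, Real.le_sqrt hσ0.le (by positivity)]
    rcases max_cases |s| 1 with ⟨he, h2⟩ | ⟨he, h2⟩ <;> nlinarith [sq_abs s]
  have hSj : Real.sqrt σ ≤ Real.sqrt (jap s) := Real.sqrt_le_sqrt hσJ
  -- split the integral
  have hsplit : (∫ θ in (0:ℝ)..π, (1 + (x θ) ^ 2)⁻¹) =
      ((∫ θ in (0:ℝ)..θ₁, (1 + (x θ) ^ 2)⁻¹) + ∫ θ in θ₁..(π/2), (1 + (x θ) ^ 2)⁻¹)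
        + ∫ θ in (π/2)..π, (1 + (x θ) ^ 2)⁻¹ := by
    rw [intervalIntegral.integral_add_adjacent_intervals (hhc.intervalIntegrable _ _)
        (hhc.intervalIntegrable _ _),
      intervalIntegral.integral_add_adjacent_intervals (hhc.intervalIntegrable _ _)
        (hhc.intervalIntegrable _ _)]
  -- Region 1
  have P1 : ∀ θ ∈ Icc (0:ℝ) θ₁, (1 + (x θ) ^ 2)⁻¹ ≤ 8 / (1 + s ^ 2) := by
    intro θ hθ
    have hc1 : Real.cos θ ≤ 1 := Real.cos_le_one θ
    have hc2 : 1 - θ ^ 2 / 2 ≤ Real.cos θ := Real.one_sub_sq_div_two_le_cos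
    have hθsq : θ ^ 2 ≤ σ / r := by
      rw [← hθ₁sq]
      exact pow_le_pow_left₀ hθ.1 hθ.2 2
    have hu1 : 0 ≤ r * (1 - Real.cos θ) := mul_nonneg hr0.le (by linarith)
    have hu2 : r * (1 - Real.cos θ) ≤ σ / 2 := by
      have e1 : r * (1 - Real.cos θ) ≤ r * (θ ^ 2 / 2) :=
        mul_le_mul_of_nonneg_left (by linarith) hr0.le
      have e2 : r * (θ ^ 2 / 2) ≤ r * (σ / r / 2) :=
        mul_le_mul_of_nonneg_left (by linarith) hr0.le
      have e3 : r * (σ / r / 2) = σ / 2 := by field_simp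
      linarith
    have hxθ : x θ = r * (1 - Real.cos θ) - s := by rw [hs]; simp only [hx]; ring
    have hd : (0:ℝ) < 1 + (x θ) ^ 2 := by positivity
    rcases le_or_gt |s| 1 with ht | ht
    · have h2 : (1:ℝ) ≤ 8 / (1 + s ^ 2) := by
        rw [le_div_iff₀ (by positivity)]
        nlinarith [abs_le.1 ht]
      have h1 : (1 + (x θ) ^ 2)⁻¹ ≤ 1 := by
        rw [inv_le_one_iff₀]; right; nlinarith
      linarith
    · have hσt : σ = |s| := max_eq_left ht.le
      have hx2 : s ^ 2 / 4 ≤ (x θ) ^ 2 := by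
        rcases le_or_gt 0 s with hs0 | hs0
        · have habs : |s| = s := abs_of_nonneg hs0
          nlinarith [hu1, hu2]
        · have habs : |s| = -s := abs_of_neg hs0
          nlinarith [hu1, hu2]
      rw [inv_eq_one_div, div_le_div_iff₀ hd (by positivity)]
      nlinarith [hx2]
  have I1 : (∫ θ in (0:ℝ)..θ₁, (1 + (x θ) ^ 2)⁻¹) ≤ θ₁ * (8 / (1 + s ^ 2)) := by
    have h := intervalIntegral.integral_mono_on hθ₁pos.le (hhc.intervalIntegrable _ _)
      ((continuous_const.intervalIntegrable 0 θ₁ : IntervalIntegrable (fun _ : ℝ => 8 / (1 + s ^ 2)) volume 0 θ₁)) P1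
    rwa [intervalIntegral.integral_const, smul_eq_mul, sub_zero] at h
  have I1' : θ₁ * (8 / (1 + s ^ 2)) ≤ 8 * (Real.sqrt r)⁻¹ * (Real.sqrt (jap s))⁻¹ := by
    have hkey : Real.sqrt σ * Real.sqrt (jap s) ≤ 1 + s ^ 2 := by
      have e2 : Real.sqrt (jap s) * Real.sqrt (jap s) = jap s :=
        Real.mul_self_sqrt (jap_pos s).le
      have e3 : jap s ≤ 1 + s ^ 2 := by nlinarith [jap_sq s, one_le_jap s]
      nlinarith [hSj, hjpos]
    have step : (Real.sqrt σ * 8) / (Real.sqrt r * (1 + s ^ 2)) ≤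
        8 / (Real.sqrt r * Real.sqrt (jap s)) := by
      rw [div_le_div_iff₀ (by positivity) (by positivity)]
      nlinarith [hkey, hRpos]
    calc θ₁ * (8 / (1 + s ^ 2))
        = (Real.sqrt σ * 8) / (Real.sqrt r * (1 + s ^ 2)) := by
          rw [hθ₁, Real.sqrt_div hσ0.le, div_mul_div_comm]
      _ ≤ 8 / (Real.sqrt r * Real.sqrt (jap s)) := step
      _ = 8 * (Real.sqrt r)⁻¹ * (Real.sqrt (jap s))⁻¹ := by
          rw [div_eq_mul_inv, mul_inv]; ring
  -- Region 2
  have hc2pos : 0 < 2 / π * (r * θ₁) := by positivity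
  have hsin : ∀ θ ∈ Icc θ₁ (π/2), 2 / π * (r * θ₁) ≤ r * Real.sin θ := by
    intro θ hθ
    have h1 : 2 / π * θ ≤ Real.sin θ := Real.mul_le_sin (hθ₁pos.le.trans hθ.1) hθ.2
    have h2 : θ₁ ≤ θ := hθ.1
    have hπ : (0:ℝ) < π := Real.pi_pos
    have h3 : 2 / π * θ₁ ≤ 2 / π * θ := by
      apply mul_le_mul_of_nonneg_left h2 (by positivity)
    nlinarith
  obtain ⟨θ₀, hθ₀⟩ := exists_center θ₁ (π/2) (2 / π * (r * θ₁)) hθ₁pi2 hc2pos.le x hxc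
    (mono_aux M r (2 / π * (r * θ₁)) θ₁ (π/2) hsin)
  have I2 : (∫ θ in θ₁..(π/2), (1 + (x θ) ^ 2)⁻¹) ≤ π / (2 / π * (r * θ₁)) :=
    key_int θ₁ (π/2) θ₀ _ hθ₁pi2 hc2pos x hxc hθ₀
  have I2' : π / (2 / π * (r * θ₁)) ≤ 8 * (Real.sqrt r)⁻¹ * (Real.sqrt (jap s))⁻¹ := by
    have hrθ : r * θ₁ = Real.sqrt r * Real.sqrt σ := by
      have hrr : Real.sqrt r * Real.sqrt r = r := Real.mul_self_sqrt hr0.le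
      rw [hθ₁, Real.sqrt_div hσ0.le, mul_div_assoc', div_eq_iff hRpos.ne']
      linear_combination (-Real.sqrt σ) * hrr
    have hπ : (0:ℝ) < π := Real.pi_pos
    have hπ315 : π < 3.15 := Real.pi_lt_d2
    have hπ2 : π ^ 2 ≤ 10 := by nlinarith
    have goal2 : π / (2 / π * (r * θ₁)) = π ^ 2 / (2 * (Real.sqrt r * Real.sqrt σ)) := by
      rw [hrθ]; field_simp
    rw [goal2]
    have step : π ^ 2 / (2 * (Real.sqrt r * Real.sqrt σ)) ≤
        8 / (Real.sqrt r * Real.sqrt (jap s)) := by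
      rw [div_le_div_iff₀ (by positivity) (by positivity)]
      have e1 : π ^ 2 * (Real.sqrt r * Real.sqrt (jap s)) ≤
          10 * (Real.sqrt r * Real.sqrt (jap s)) := by
        apply mul_le_mul_of_nonneg_right hπ2 (by positivity)
      have e2 : 10 * (Real.sqrt r * Real.sqrt (jap s)) ≤
          10 * (Real.sqrt r * (1.5 * Real.sqrt σ)) := by
        apply mul_le_mul_of_nonneg_left _ (by norm_num)
        exact mul_le_mul_of_nonneg_left hjS hRpos.le
      nlinarith [hRpos, hSpos]
    calc π ^ 2 / (2 * (Real.sqrt r * Real.sqrt σ)) ≤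
        8 / (Real.sqrt r * Real.sqrt (jap s)) := step
      _ = 8 * (Real.sqrt r)⁻¹ * (Real.sqrt (jap s))⁻¹ := by
          rw [div_eq_mul_inv, mul_inv]; ring
  -- Region 3
  have P3 : ∀ θ ∈ Icc (π/2) π, (2 * r / π) ^ 2 * (θ - π/2) ^ 2 ≤ (x θ) ^ 2 := by
    intro θ hθ
    have h1 : 2 / π * (θ - π/2) ≤ Real.sin (θ - π/2) :=
      Real.mul_le_sin (by linarith [hθ.1]) (by linarith [hθ.2])
    rw [Real.sin_sub_pi_div_two] at h1
    have h2 : r * (2 / π * (θ - π/2)) ≤ r * (-Real.cos θ) :=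
      mul_le_mul_of_nonneg_left h1 hr0.le
    have h3 : (2 * r / π) * (θ - π/2) ≤ x θ := by
      have h4 : (2 * r / π) * (θ - π/2) = r * (2 / π * (θ - π/2)) := by ring
      have h5 : x θ = M + r * (-Real.cos θ) := by simp only [hx]; ring
      rw [h4, h5]; linarith
    exact sq_aux (by linarith [hθ.1]) h3 (by positivity)
  have I3 : (∫ θ in (π/2)..π, (1 + (x θ) ^ 2)⁻¹) ≤ π / (2 * r / π) :=
    key_int (π/2) π (π/2) _ (by linarith [Real.pi_pos]) (by positivity) x hxc P3
  have I3' : π / (2 * r / π) ≤ 5 * r⁻¹ := by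
    have hπ : (0:ℝ) < π := Real.pi_pos
    have hπ315 : π < 3.15 := Real.pi_lt_d2
    have e1 : π / (2 * r / π) = π ^ 2 / (2 * r) := by field_simp
    rw [e1, div_le_iff₀ (by positivity)]
    have : 5 * r⁻¹ * (2 * r) = 10 := by field_simp; ring
    rw [this]; nlinarith
  -- combine
  have hX : 0 ≤ (Real.sqrt r)⁻¹ * (Real.sqrt (jap s))⁻¹ := by positivity
  have hrinv : 0 ≤ r⁻¹ := by positivity
  rw [hsplit]
  have := I1.trans I1'
  have := I2.trans I2'
  have := I3.trans I3'
  linarith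

lemma cont_aux (M r : ℝ) : Continuous fun θ : ℝ => (1 + (M - r * Real.cos θ) ^ 2)⁻¹ := by
  apply Continuous.inv₀
  · fun_prop
  · intro t; positivity

lemma symm_step (m r : ℝ) :
    (∫ θ in (0:ℝ)..(2*π), (1 + (m - r * Real.cos θ) ^ 2)⁻¹) =
      ∫ θ in (0:ℝ)..(2*π), (1 + (|m| - r * Real.cos θ) ^ 2)⁻¹ := by
  rcases le_or_gt 0 m with hm | hm
  · rw [abs_of_nonneg hm]
  · rw [abs_of_neg hm]
    set F : ℝ → ℝ := fun θ => (1 + (-m + r * Real.cos θ) ^ 2)⁻¹ with hF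
    have hper : Function.Periodic F (2*π) := fun θ => by
      simp only [hF, Real.cos_add_two_pi]
    have e1 : (∫ θ in (0:ℝ)..(2*π), (1 + (m - r * Real.cos θ) ^ 2)⁻¹) =
        ∫ θ in (0:ℝ)..(2*π), F θ := by
      apply intervalIntegral.integral_congr
      intro θ _
      simp only [hF]
      ring_nf
    have e2 : (∫ θ in (0:ℝ)..(2*π), F θ) = ∫ θ in (-π)..π, F θ := by
      have h := hper.intervalIntegral_add_eq 0 (-π)
      rw [zero_add, show -π + 2*π = π by ring] at h
      exact h
    have e3 : (∫ θ in (0:ℝ)..(2*π), F (θ - π)) = ∫ θ in (-π)..π, F θ := by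
      rw [intervalIntegral.integral_comp_sub_right F π]
      norm_num
      rw [show 2 * π - π = π by ring]
    have e4 : (∫ θ in (0:ℝ)..(2*π), F (θ - π)) =
        ∫ θ in (0:ℝ)..(2*π), (1 + (-m - r * Real.cos θ) ^ 2)⁻¹ := by
      apply intervalIntegral.integral_congr
      intro θ _
      simp only [hF, Real.cos_sub_pi]
      ring_nf
    rw [e1, e2, ← e3, e4]

lemma half_step (M r : ℝ) :
    (∫ θ in (0:ℝ)..(2*π), (1 + (M - r * Real.cos θ) ^ 2)⁻¹) =
      2 * ∫ θ in (0:ℝ)..π, (1 + (M - r * Real.cos θ) ^ 2)⁻¹ := by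
  have hc := cont_aux M r
  have e0 : (∫ θ in (0:ℝ)..π, (1 + (M - r * Real.cos θ) ^ 2)⁻¹)
      + (∫ θ in π..(2*π), (1 + (M - r * Real.cos θ) ^ 2)⁻¹)
      = ∫ θ in (0:ℝ)..(2*π), (1 + (M - r * Real.cos θ) ^ 2)⁻¹ :=
    intervalIntegral.integral_add_adjacent_intervals (hc.intervalIntegrable _ _)
      (hc.intervalIntegrable _ _)
  have e1 : (∫ θ in π..(2*π), (1 + (M - r * Real.cos θ) ^ 2)⁻¹) =
      ∫ θ in (0:ℝ)..π, (1 + (M - r * Real.cos θ) ^ 2)⁻¹ := by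
    have h := intervalIntegral.integral_comp_sub_left (a := 0) (b := π)
      (fun θ => (1 + (M - r * Real.cos θ) ^ 2)⁻¹) (2*π)
    rw [show 2*π - π = π by ring, show 2*π - 0 = 2*π by ring] at h
    rw [← h]
    apply intervalIntegral.integral_congr
    intro θ _
    simp only [Real.cos_two_pi_sub]
  linarith

/-- Lemma 2.1, estimate (2.7): for `r > 1` and `|m| ≤ 2r`,
`∫₀^{2π} |α(m - r cos θ)| dθ ≤ C (r⁻¹ + r^{-1/2} ⟨r - |m|⟩^{-1/2})`. -/
theorem circle_int_schwartz_larger (α : SchwartzMap ℝ ℂ) :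
    ∃ C : ℝ, 0 < C ∧ ∀ m r : ℝ, 1 < r → |m| ≤ 2 * r →
      (∫ θ in (0 : ℝ)..(2 * π), ‖α (m - r * Real.cos θ)‖) ≤
        C * (r⁻¹ + r ^ (-(1 / 2) : ℝ) * jap (r - |m|) ^ (-(1 / 2) : ℝ)) := by
  obtain ⟨C0, hC0pos, hC0⟩ := α.decay 0 0
  obtain ⟨C2, hC2pos, hC2⟩ := α.decay 2 0
  set A := C0 + C2 with hA
  have hApos : 0 < A := by positivity
  have hαbd : ∀ y : ℝ, ‖α y‖ ≤ A * (1 + y ^ 2)⁻¹ := by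
    intro y
    have h0 := hC0 y
    have h2 := hC2 y
    rw [norm_iteratedFDeriv_zero] at h0 h2
    rw [pow_zero, one_mul] at h0
    rw [Real.norm_eq_abs, sq_abs] at h2
    have hd : (0:ℝ) < 1 + y ^ 2 := by positivity
    have key : ‖α y‖ * (1 + y ^ 2) ≤ A := by nlinarith [norm_nonneg (α y)]
    calc ‖α y‖ = ‖α y‖ * (1 + y ^ 2) * (1 + y ^ 2)⁻¹ := by field_simp
      _ ≤ A * (1 + y ^ 2)⁻¹ := mul_le_mul_of_nonneg_right key (by positivity)
  refine ⟨40 * A, by positivity, ?_⟩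
  intro m r hr hm
  have hr0 : (0:ℝ) < r := by linarith
  have hπ : (0:ℝ) < π := Real.pi_pos
  have hrpow : r ^ (-(1/2) : ℝ) = (Real.sqrt r)⁻¹ := by
    rw [Real.rpow_neg hr0.le, ← Real.sqrt_eq_rpow]
  have hjpow : jap (r - |m|) ^ (-(1/2) : ℝ) = (Real.sqrt (jap (r - |m|)))⁻¹ := by
    rw [Real.rpow_neg (jap_pos _).le, ← Real.sqrt_eq_rpow]
  have hcα : Continuous fun θ : ℝ => ‖α (m - r * Real.cos θ)‖ := by
    apply Continuous.norm
    exact α.continuous.comp (by fun_prop)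
  have step1 : (∫ θ in (0:ℝ)..(2*π), ‖α (m - r * Real.cos θ)‖) ≤
      ∫ θ in (0:ℝ)..(2*π), A * (1 + (m - r * Real.cos θ) ^ 2)⁻¹ := by
    apply intervalIntegral.integral_mono_on (by positivity)
      (hcα.intervalIntegrable _ _) ((continuous_const.mul (cont_aux m r)).intervalIntegrable _ _)
    intro θ _
    exact hαbd _
  have step2 : (∫ θ in (0:ℝ)..(2*π), A * (1 + (m - r * Real.cos θ) ^ 2)⁻¹) =
      A * ∫ θ in (0:ℝ)..(2*π), (1 + (m - r * Real.cos θ) ^ 2)⁻¹ :=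
    intervalIntegral.integral_const_mul A _
  have step3 := symm_step m r
  have step4 := half_step |m| r
  have step5 := propP |m| r hr (abs_nonneg m) hm
  have hX : (0:ℝ) ≤ (Real.sqrt r)⁻¹ * (Real.sqrt (jap (r - |m|)))⁻¹ := by positivity
  have hIpos : (0:ℝ) ≤ ∫ θ in (0:ℝ)..π, (1 + (|m| - r * Real.cos θ) ^ 2)⁻¹ := by
    apply intervalIntegral.integral_nonneg hπ.le
    intro θ _; positivity
  calc (∫ θ in (0:ℝ)..(2*π), ‖α (m - r * Real.cos θ)‖)
      ≤ ∫ θ in (0:ℝ)..(2*π), A * (1 + (m - r * Real.cos θ) ^ 2)⁻¹ := step1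
    _ = A * ∫ θ in (0:ℝ)..(2*π), (1 + (m - r * Real.cos θ) ^ 2)⁻¹ := step2
    _ = A * (2 * ∫ θ in (0:ℝ)..π, (1 + (|m| - r * Real.cos θ) ^ 2)⁻¹) := by
        rw [step3, step4]
    _ ≤ A * (2 * (20 * (r⁻¹ + (Real.sqrt r)⁻¹ * (Real.sqrt (jap (r - |m|)))⁻¹))) := by
        apply mul_le_mul_of_nonneg_left _ hApos.le
        apply mul_le_mul_of_nonneg_left step5 (by norm_num)
    _ = 40 * A * (r⁻¹ + r ^ (-(1/2) : ℝ) * jap (r - |m|) ^ (-(1/2) : ℝ)) := by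
        rw [hrpow, hjpow]; ring

end
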